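/- There is a constant c > 0 such that for every 2π-periodic continuous function f : ℝ → ℝ and every n ≥ 1, max_{x∈ℝ} |f(x) − U_n(f,x)| ≤ c·ω(f, 1/n), where ω is the modulus of continuity of f. -/

import Mathlib

open Real

/-- The fundamental function of trigonometric interpolation at the equidistant
nodes `x_k = 2kπ/(2n+1)`, with the removable singularities filled in by 1. -/
noncomputable def ell (n k : ℕ) (x : ℝ) : ℝ :=
  if Real.sin ((x - 2 * k * π / (2 * n + 1)) / 2) = 0 then 1
  else Real.sin ((2 * n + 1) * (x - 2 * k * π / (2 * n + 1)) / 2) /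
    ((2 * n + 1) * Real.sin ((x - 2 * k * π / (2 * n + 1)) / 2))

/-- The Kis–Vértesi operator. -/
noncomputable def Un (n : ℕ) (f : ℝ → ℝ) (x : ℝ) : ℝ :=
  ∑ k ∈ Finset.range (2 * n + 1),
    f (2 * k * π / (2 * n + 1)) * (4 * (ell n k x) ^ 3 - 3 * (ell n k x) ^ 4)

/-- Modulus of continuity of `f : ℝ → ℝ`. -/
noncomputable def omegaR (f : ℝ → ℝ) (δ : ℝ) : ℝ :=
  sSup {d : ℝ | ∃ x y : ℝ, |x - y| ≤ δ ∧ d = |f x - f y|}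

/-!
Write `N = 2n+1` and `D_n(u) = ∑_{|j| ≤ n} e^{iju}`, so that `ℓ_k(x) = D_n(x - x_k) / N`.
Expanding a power of `D_n` and summing over the nodes kills every frequency not divisible by `N`;
for the squares, cubes and fourth powers only the frequencies `0` and `±N` survive, with
coefficients counting the pairs, triples and quadruples in `[-n, n]` with that sum. This gives
`∑ ℓ_k² = 1` and `∑ (4ℓ_k³ - 3ℓ_k⁴) = 1`, hence
`f(x) - U_n(f, x) = ∑ (f(x) - f(x_k)) (4ℓ_k³ - 3ℓ_k⁴)`.
Reducing `x - x_k` modulo `2π` to `v ∈ [-π, π]`, Jordan's inequality gives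
`|v| ≤ π |sin((x - x_k)/2)|`, and then
`|f(x) - f(x_k)| ≤ (1 + n|v|) ω(f, 1/n)`, while `N |sin((x - x_k)/2)| |ℓ_k| ≤ 1` gives
`n |v| |ℓ_k| ≤ π/2`. Together with `|4ℓ³ - 3ℓ⁴| ≤ 7|ℓ|³` each term is at most
`21 ω(f, 1/n) ℓ_k²`, and the squares sum to `1`.
-/

open Finset Complex

noncomputable def expI (t : ℤ) (u : ℝ) : ℂ := exp (t * u * I)

lemma expI_add_left (s t : ℤ) (u : ℝ) : expI (s + t) u = expI s u * expI t u := by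
  simp only [expI, ← Complex.exp_add]; push_cast; ring_nf

lemma expI_sub_right (t : ℤ) (x y : ℝ) : expI t (x - y) = expI t x * expI (-t) y := by
  simp only [expI, ← Complex.exp_add]; push_cast; ring_nf

lemma expI_zero_left (u : ℝ) : expI 0 u = 1 := by simp [expI]

lemma norm_expI (t : ℤ) (u : ℝ) : ‖expI t u‖ = 1 := by
  simpa [expI] using norm_exp_ofReal_mul_I (t * u)

lemma expI_add_expI_neg (t : ℤ) (u : ℝ) : expI t u + expI (-t) u = 2 * Real.cos (t * u) := by
  simp only [expI, Complex.ofReal_cos, Complex.cos, Int.cast_neg, Complex.ofReal_mul,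
    Complex.ofReal_intCast]
  ring_nf

noncomputable abbrev symmIcc (n : ℕ) : Finset ℤ := Icc (-(n : ℤ)) n

lemma sum_symmIcc_succ {M : Type*} [AddCommMonoid M] (g : ℤ → M) (m : ℕ) :
    ∑ c ∈ symmIcc (m + 1), g c = ∑ c ∈ symmIcc m, g c + (g (m + 1) + g (-(m + 1))) := by
  have : symmIcc (m + 1) = insert (-(m + 1 : ℤ)) (insert (m + 1 : ℤ) (symmIcc m)) := by
    ext a; simp only [mem_Icc, mem_insert]; omega
  rw [this, sum_insert (by simp only [mem_insert, mem_Icc]; omega),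
    sum_insert (by simp only [mem_Icc]; omega)]
  abel

lemma card_symmIcc (m : ℕ) : #(symmIcc m) = 2 * m + 1 := by
  rw [Int.card_Icc]; omega

noncomputable def dirichletKernel (n : ℕ) (u : ℝ) : ℂ := ∑ j ∈ symmIcc n, expI j u

lemma sin_half_mul_dirichletKernel (n : ℕ) (u : ℝ) :
    (Real.sin (u / 2) : ℂ) * dirichletKernel n u = Real.sin ((2 * n + 1) * u / 2) := by
  induction n with
  | zero => simp [dirichletKernel, symmIcc, expI_zero_left]
  | succ n ih =>
    have hstep : Real.sin ((2 * (n + 1 : ℕ) + 1) * u / 2) =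
        Real.sin ((2 * n + 1) * u / 2) + 2 * Real.sin (u / 2) * Real.cos ((n + 1) * u) := by
      have := Real.sin_sub_sin ((2 * (n + 1 : ℕ) + 1) * u / 2) ((2 * n + 1) * u / 2)
      push_cast at this ⊢
      rw [show ((2 * (n + 1) + 1) * u / 2 - (2 * n + 1) * u / 2) / 2 = u / 2 by ring,
        show ((2 * (n + 1) + 1) * u / 2 + (2 * n + 1) * u / 2) / 2 = (n + 1) * u by ring] at this
      linarith
    rw [dirichletKernel, sum_symmIcc_succ, expI_add_expI_neg, mul_add, ← dirichletKernel, ih, hstep]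
    push_cast
    ring

lemma dirichletKernel_of_sin_half_eq_zero {n : ℕ} {u : ℝ} (h : Real.sin (u / 2) = 0) :
    dirichletKernel n u = 2 * n + 1 := by
  obtain ⟨m, hm⟩ := Real.sin_eq_zero_iff.1 h
  obtain rfl : u = m * (2 * π) := by linarith
  have hj : ∀ j : ℤ, expI j (m * (2 * π)) = 1 := fun j => by
    rw [expI, show (j : ℂ) * ↑(m * (2 * π)) * I = (j * m : ℤ) * (2 * π * I) by push_cast; ring]
    exact Complex.exp_int_mul_two_pi_mul_I _
  simp only [dirichletKernel, hj, sum_const, card_symmIcc, nsmul_one]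
  push_cast; ring

lemma ofReal_ell (n k : ℕ) (x : ℝ) :
    (ell n k x : ℂ) = dirichletKernel n (x - 2 * k * π / (2 * n + 1)) / (2 * n + 1) := by
  have hN : (2 * n + 1 : ℂ) ≠ 0 := by exact_mod_cast (by positivity : (2 * n + 1 : ℝ) ≠ 0)
  rw [ell]
  set u := x - 2 * k * π / (2 * n + 1)
  split_ifs with h
  · rw [dirichletKernel_of_sin_half_eq_zero h]; push_cast; field_simp
  · rw [eq_div_iff hN, ← mul_left_inj' (ofReal_ne_zero.2 h), mul_comm (dirichletKernel n u),
      sin_half_mul_dirichletKernel]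
    have hs : (Real.sin (u / 2) : ℂ) ≠ 0 := ofReal_ne_zero.2 h
    simp only [ofReal_div, ofReal_mul, ofReal_add, ofReal_one, ofReal_natCast, ofReal_ofNat]
    field_simp

lemma norm_dirichletKernel_le (n : ℕ) (u : ℝ) : ‖dirichletKernel n u‖ ≤ 2 * n + 1 := by
  refine (norm_sum_le _ _).trans ?_
  simp only [norm_expI, sum_const, card_symmIcc, nsmul_one]
  push_cast; rfl

lemma abs_ell_le_one (n k : ℕ) (x : ℝ) : |ell n k x| ≤ 1 := by
  have hN : (0 : ℝ) < 2 * n + 1 := by positivity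
  have := norm_dirichletKernel_le n (x - 2 * k * π / (2 * n + 1))
  have h := congrArg norm (ofReal_ell n k x)
  rw [Complex.norm_real, Real.norm_eq_abs, norm_div] at h
  rw [h, show (2 * n + 1 : ℂ) = ((2 * n + 1 : ℝ) : ℂ) by push_cast; rfl, Complex.norm_real,
    Real.norm_of_nonneg hN.le, div_le_one hN]
  exact this

lemma abs_ell_mul_abs_sin_le (n k : ℕ) (x : ℝ) :
    |ell n k x| * ((2 * n + 1) * |Real.sin ((x - 2 * k * π / (2 * n + 1)) / 2)|) ≤ 1 := by
  rw [ell]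
  split_ifs with h
  · simp [h]
  · rw [abs_div, abs_mul, abs_of_pos (by positivity : (0 : ℝ) < 2 * n + 1),
      div_mul_cancel₀ _ (by positivity)]
    exact Real.abs_sin_le_one _

lemma sum_range_expI_node (N : ℕ) (hN : N ≠ 0) (t : ℤ) (x : ℝ) :
    ∑ k ∈ range N, expI t (x - 2 * k * π / N) = if (N : ℤ) ∣ t then N * expI t x else 0 := by
  have hζ := Complex.isPrimitiveRoot_exp N hN
  set z := exp (2 * π * I / N) ^ (-t) with hz
  have hterm : ∀ k : ℕ, expI t (x - 2 * k * π / N) = expI t x * z ^ k := fun k => by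
    rw [expI_sub_right, hz, ← exp_int_mul, ← Complex.exp_nat_mul]
    congr 1
    rw [expI]
    congr 1
    push_cast
    field_simp
  simp only [hterm, ← mul_sum]
  split_ifs with hdvd
  · have hz : z = 1 := (hζ.zpow_eq_one_iff_dvd _).2 (dvd_neg.2 hdvd)
    simp [hz, mul_comm]
  · have hz : z ≠ 1 := fun h => hdvd (dvd_neg.1 ((hζ.zpow_eq_one_iff_dvd _).1 h))
    have hzN : z ^ N = 1 := by
      rw [← zpow_natCast, ← zpow_mul, hζ.zpow_eq_one_iff_dvd]
      exact dvd_mul_left _ _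
    rw [geom_sum_eq hz, hzN, sub_self, zero_div, mul_zero]

lemma mem_of_dvd_of_abs_lt {N t : ℤ} (hdvd : N ∣ t) (ht : |t| < 2 * N) :
    t ∈ ({-N, 0, N} : Finset ℤ) := by
  obtain ⟨m, rfl⟩ := hdvd
  have hN : 0 < N := by linarith [abs_nonneg (N * m)]
  have : -2 < m ∧ m < 2 := by
    rw [abs_lt] at ht
    constructor <;> nlinarith
  obtain ⟨h1, h2⟩ := this
  interval_cases m <;> simp

lemma sum_range_sum_expI {ι : Type*} (N : ℕ) (hN : N ≠ 0) (R : Finset ι) (τ : ι → ℤ)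
    (hτ : ∀ r ∈ R, |τ r| < 2 * N) (x : ℝ) :
    ∑ k ∈ range N, ∑ r ∈ R, expI (τ r) (x - 2 * k * π / N) =
      N * (#{r ∈ R | τ r = -N} * expI (-N) x + #{r ∈ R | τ r = 0} +
        #{r ∈ R | τ r = N} * expI N x) := by
  have hfiber : ∀ t : ℤ, (N : ℤ) ∣ t →
      ∑ r ∈ {r ∈ R | (N : ℤ) ∣ τ r} with τ r = t, N * expI (τ r) x =
        N * (#{r ∈ R | τ r = t} * expI t x) := by
    intro t ht
    rw [filter_filter, filter_congr (q := fun r => τ r = t)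
      (fun r _ => ⟨And.right, fun h => ⟨h ▸ ht, h⟩⟩)]
    rw [sum_congr rfl (g := fun _ => (N : ℂ) * expI t x) (fun r hr => by
      rw [(mem_filter.1 hr).2]), sum_const, nsmul_eq_mul]
    ring
  rw [sum_comm]
  simp only [sum_range_expI_node N hN]
  rw [← sum_filter, ← sum_fiberwise_of_maps_to (t := ({-(N : ℤ), 0, (N : ℤ)} : Finset ℤ))
    (fun r hr => mem_of_dvd_of_abs_lt (mem_filter.1 hr).2 (hτ r (mem_filter.1 hr).1))]
  have hN' : (0 : ℤ) < N := by omega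
  rw [sum_insert (by simp only [mem_insert, mem_singleton]; omega),
    sum_insert (by simp only [mem_singleton]; omega), sum_singleton,
    hfiber _ (dvd_neg.2 dvd_rfl), hfiber _ (dvd_zero _), hfiber _ dvd_rfl]
  simp only [expI_zero_left]
  ring

lemma sum_mul_sum_expI {α β : Type*} (A : Finset α) (B : Finset β) (f : α → ℤ) (g : β → ℤ)
    (u : ℝ) : (∑ a ∈ A, expI (f a) u) * (∑ b ∈ B, expI (g b) u) =
      ∑ p ∈ A ×ˢ B, expI (f p.1 + g p.2) u := by
  rw [sum_mul_sum, sum_product]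
  simp only [expI_add_left]

lemma dirichletKernel_sq (n : ℕ) (u : ℝ) :
    dirichletKernel n u ^ 2 = ∑ p ∈ symmIcc n ×ˢ symmIcc n, expI (p.1 + p.2) u :=
  sq (dirichletKernel n u) ▸ sum_mul_sum_expI (symmIcc n) (symmIcc n) (fun a => a) (fun a => a) u

lemma dirichletKernel_pow_three (n : ℕ) (u : ℝ) :
    dirichletKernel n u ^ 3 =
      ∑ r ∈ symmIcc n ×ˢ (symmIcc n ×ˢ symmIcc n), expI (r.1 + (r.2.1 + r.2.2)) u := by
  rw [pow_succ', dirichletKernel_sq, dirichletKernel]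
  exact sum_mul_sum_expI (symmIcc n) (symmIcc n ×ˢ symmIcc n) (fun a => a) (fun q => q.1 + q.2) u

lemma dirichletKernel_pow_four (n : ℕ) (u : ℝ) :
    dirichletKernel n u ^ 4 =
      ∑ r ∈ (symmIcc n ×ˢ symmIcc n) ×ˢ (symmIcc n ×ˢ symmIcc n),
        expI ((r.1.1 + r.1.2) + (r.2.1 + r.2.2)) u := by
  rw [show 4 = 2 * 2 from rfl, pow_mul, dirichletKernel_sq, sq]
  exact sum_mul_sum_expI (symmIcc n ×ˢ symmIcc n) (symmIcc n ×ˢ symmIcc n) (fun q => q.1 + q.2)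
    (fun q => q.1 + q.2) u

lemma card_filter_prod_add {α β : Type*} (A : Finset α) (B : Finset β) (f : α → ℤ) (g : β → ℤ)
    (t : ℤ) : #{p ∈ A ×ˢ B | f p.1 + g p.2 = t} = ∑ a ∈ A, #{b ∈ B | g b = t - f a} := by
  rw [card_filter, sum_product]
  refine sum_congr rfl fun a _ => ?_
  simp only [card_filter, eq_sub_iff_add_eq']

lemma card_filter_neg_eq {ι : Type*} [InvolutiveNeg ι] (R : Finset ι) (hR : ∀ r ∈ R, -r ∈ R)
    (τ : ι → ℤ) (hτ : ∀ r, τ (-r) = -τ r) (t : ℤ) :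
    #{r ∈ R | τ r = -t} = #{r ∈ R | τ r = t} := by
  refine card_nbij' Neg.neg Neg.neg ?_ ?_ (fun r _ => neg_neg r) (fun r _ => neg_neg r) <;>
  · intro r hr
    simp only [coe_filter, Set.mem_ofPred_eq, hτ] at hr ⊢
    exact ⟨hR r hr.1, by simp [hr.2]⟩

noncomputable def pairCount (n : ℕ) (s : ℤ) : ℕ :=
  #{p ∈ symmIcc n ×ˢ symmIcc n | p.1 + p.2 = s}

noncomputable def tripleCount (n : ℕ) (t : ℤ) : ℕ :=
  #{r ∈ symmIcc n ×ˢ (symmIcc n ×ˢ symmIcc n) | r.1 + (r.2.1 + r.2.2) = t}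

noncomputable def quadCount (n : ℕ) (t : ℤ) : ℕ :=
  #{r ∈ (symmIcc n ×ˢ symmIcc n) ×ˢ (symmIcc n ×ˢ symmIcc n) |
    (r.1.1 + r.1.2) + (r.2.1 + r.2.2) = t}

lemma pairCount_eq (n : ℕ) (s : ℤ) : (pairCount n s : ℤ) = max (2 * n + 1 - |s|) 0 := by
  have hset : {p ∈ symmIcc n ×ˢ symmIcc n | p.1 + p.2 = s} =
      (Icc (max (-(n : ℤ)) (s - n)) (min (n : ℤ) (s + n))).image (fun a => (a, s - a)) := by
    ext ⟨a, b⟩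
    simp only [mem_filter, mem_product, mem_image, mem_Icc, Prod.mk.injEq]
    constructor
    · rintro ⟨⟨⟨h1, h2⟩, h3, h4⟩, h5⟩
      exact ⟨a, ⟨by omega, by omega⟩, rfl, by omega⟩
    · rintro ⟨a, ⟨h1, h2⟩, rfl, rfl⟩
      exact ⟨⟨⟨by omega, by omega⟩, by omega, by omega⟩, by omega⟩
  rw [pairCount, hset, card_image_of_injective _ (fun a b h => (Prod.mk.inj h).1), Int.card_Icc,
    Int.toNat_eq_max]
  rcases abs_cases s with ⟨h, _⟩ | ⟨h, _⟩ <;> rw [h] <;> omega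

lemma tripleCount_eq_sum (n : ℕ) (t : ℤ) :
    tripleCount n t = ∑ a ∈ symmIcc n, pairCount n (t - a) :=
  card_filter_prod_add (symmIcc n) (symmIcc n ×ˢ symmIcc n) (fun a => a) (fun q => q.1 + q.2) t

lemma quadCount_eq_sum (n : ℕ) (t : ℤ) :
    quadCount n t = ∑ s ∈ symmIcc (2 * n), pairCount n s * pairCount n (t - s) := by
  rw [quadCount, card_filter_prod_add (symmIcc n ×ˢ symmIcc n) (symmIcc n ×ˢ symmIcc n)
    (fun q => q.1 + q.2) (fun q => q.1 + q.2) t]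
  rw [← sum_fiberwise_of_maps_to (t := symmIcc (2 * n)) (g := fun q : ℤ × ℤ => q.1 + q.2)
    (fun q hq => by simp only [mem_product, mem_Icc] at hq ⊢; push_cast; omega)]
  refine sum_congr rfl fun s _ => ?_
  rw [sum_congr rfl (g := fun _ => pairCount n (t - s)) (fun q hq => by
    rw [(mem_filter.1 hq).2, pairCount]), sum_const, smul_eq_mul]
  rfl

lemma tripleCount_neg (n : ℕ) (t : ℤ) : tripleCount n (-t) = tripleCount n t :=
  card_filter_neg_eq _
    (fun r hr => by simp only [mem_product, mem_Icc, Prod.fst_neg, Prod.snd_neg] at hr ⊢; omega)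
    (fun r : ℤ × ℤ × ℤ => r.1 + (r.2.1 + r.2.2))
    (fun r => by simp only [Prod.fst_neg, Prod.snd_neg]; ring) t

lemma quadCount_neg (n : ℕ) (t : ℤ) : quadCount n (-t) = quadCount n t :=
  card_filter_neg_eq _
    (fun r hr => by simp only [mem_product, mem_Icc, Prod.fst_neg, Prod.snd_neg] at hr ⊢; omega)
    (fun r : (ℤ × ℤ) × (ℤ × ℤ) => (r.1.1 + r.1.2) + (r.2.1 + r.2.2))
    (fun r => by simp only [Prod.fst_neg, Prod.snd_neg]; ring) t

lemma sum_symmIcc_abs (m : ℕ) : ∑ c ∈ symmIcc m, |c| = m * (m + 1) := by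
  induction m with
  | zero => simp [symmIcc]
  | succ m ih =>
    rw [sum_symmIcc_succ, ih, abs_neg, abs_of_pos (by positivity)]
    push_cast; ring

lemma sum_symmIcc_sq (m : ℕ) : 3 * ∑ c ∈ symmIcc m, c ^ 2 = m * (m + 1) * (2 * m + 1) := by
  induction m with
  | zero => simp [symmIcc]
  | succ m ih =>
    rw [sum_symmIcc_succ, mul_add, ih]
    push_cast; ring

lemma sum_symmIcc_max_zero (m : ℕ) : 2 * ∑ c ∈ symmIcc m, max c 0 = m * (m + 1) := by
  induction m with
  | zero => simp [symmIcc]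
  | succ m ih =>
    rw [sum_symmIcc_succ, mul_add, ih, max_eq_left (by positivity), max_eq_right (by linarith)]
    push_cast; ring

lemma sum_symmIcc_max_zero_sq (m : ℕ) :
    6 * ∑ c ∈ symmIcc m, max c 0 ^ 2 = m * (m + 1) * (2 * m + 1) := by
  induction m with
  | zero => simp [symmIcc]
  | succ m ih =>
    rw [sum_symmIcc_succ, mul_add, ih, max_eq_left (by positivity), max_eq_right (by linarith)]
    push_cast; ring

lemma tripleCount_zero (n : ℕ) : (tripleCount n 0 : ℤ) = 3 * n ^ 2 + 3 * n + 1 := by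
  have hterm : ∀ a ∈ symmIcc n, (pairCount n (0 - a) : ℤ) = 2 * n + 1 - |a| := fun a ha => by
    rw [pairCount_eq, zero_sub, abs_neg, max_eq_left]
    rw [mem_Icc] at ha; rw [sub_nonneg, abs_le]; omega
  rw [tripleCount_eq_sum, Nat.cast_sum, sum_congr rfl hterm, sum_sub_distrib, sum_const,
    card_symmIcc, sum_symmIcc_abs, nsmul_eq_mul]
  push_cast; ring

lemma tripleCount_two_mul_add_one (n : ℕ) :
    2 * (tripleCount n (2 * n + 1) : ℤ) = n * (n + 1) := by
  have hterm : ∀ a ∈ symmIcc n, (pairCount n (2 * n + 1 - a) : ℤ) = max a 0 := fun a ha => by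
    rw [mem_Icc] at ha
    rw [pairCount_eq, abs_of_pos (by omega)]
    ring_nf
  rw [tripleCount_eq_sum, Nat.cast_sum, sum_congr rfl hterm, sum_symmIcc_max_zero]

lemma quadCount_zero (n : ℕ) :
    3 * (quadCount n 0 : ℤ) = (2 * n + 1) * (8 * n ^ 2 + 8 * n + 3) := by
  have hterm : ∀ s ∈ symmIcc (2 * n), (pairCount n s * pairCount n (0 - s) : ℤ) =
      (2 * n + 1) ^ 2 - 2 * (2 * n + 1) * |s| + s ^ 2 := fun s hs => by
    have hs' : |s| ≤ 2 * n := abs_le.2 (by rw [mem_Icc] at hs; push_cast at hs; exact hs)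
    rw [pairCount_eq, pairCount_eq, zero_sub, abs_neg, max_eq_left (by linarith), ← sq_abs s]
    ring
  rw [quadCount_eq_sum, Nat.cast_sum]
  simp only [Nat.cast_mul]
  rw [sum_congr rfl hterm, sum_add_distrib, sum_sub_distrib, sum_const, card_symmIcc, ← mul_sum,
    nsmul_eq_mul, mul_add, sum_symmIcc_sq, sum_symmIcc_abs]
  push_cast; ring

lemma quadCount_two_mul_add_one (n : ℕ) :
    3 * (quadCount n (2 * n + 1) : ℤ) = 2 * n * (n + 1) * (2 * n + 1) := by
  have hterm : ∀ s ∈ symmIcc (2 * n), (pairCount n s * pairCount n (2 * n + 1 - s) : ℤ) =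
      (2 * n + 1) * max s 0 - max s 0 ^ 2 := fun s hs => by
    rw [mem_Icc] at hs; push_cast at hs
    rw [pairCount_eq, pairCount_eq]
    rw [abs_of_nonneg (by linarith : (0 : ℤ) ≤ 2 * n + 1 - s), sub_sub_cancel]
    rcases le_total 0 s with h | h
    · rw [abs_of_nonneg h, max_eq_left (by linarith), max_eq_left h]
      ring
    · rw [max_eq_right h]
      ring
  rw [quadCount_eq_sum, Nat.cast_sum]
  simp only [Nat.cast_mul]
  rw [sum_congr rfl hterm, sum_sub_distrib, ← mul_sum]
  have h1 := sum_symmIcc_max_zero (2 * n)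
  have h2 := sum_symmIcc_max_zero_sq (2 * n)
  push_cast at h1 h2
  refine mul_left_cancel₀ (two_ne_zero : (2 : ℤ) ≠ 0) ?_
  linear_combination (3 * (2 * n + 1) : ℤ) * h1 - h2

lemma sum_dirichletKernel_pow_three (n : ℕ) (x : ℝ) :
    ∑ k ∈ range (2 * n + 1), dirichletKernel n (x - 2 * k * π / (2 * n + 1)) ^ 3 =
      (2 * n + 1) * (tripleCount n 0 +
        tripleCount n (2 * n + 1) * (expI (-(2 * n + 1)) x + expI (2 * n + 1) x)) := by
  have h := sum_range_sum_expI (2 * n + 1) (by omega) (symmIcc n ×ˢ (symmIcc n ×ˢ symmIcc n))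
    (fun r => r.1 + (r.2.1 + r.2.2))
    (fun r hr => by simp only [mem_product, mem_Icc] at hr; push_cast; rw [abs_lt]; omega) x
  push_cast at h
  simp only [dirichletKernel_pow_three, h, ← tripleCount.eq_1, tripleCount_neg]
  ring

lemma sum_dirichletKernel_pow_four (n : ℕ) (x : ℝ) :
    ∑ k ∈ range (2 * n + 1), dirichletKernel n (x - 2 * k * π / (2 * n + 1)) ^ 4 =
      (2 * n + 1) * (quadCount n 0 +
        quadCount n (2 * n + 1) * (expI (-(2 * n + 1)) x + expI (2 * n + 1) x)) := by
  have h := sum_range_sum_expI (2 * n + 1) (by omega)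
    ((symmIcc n ×ˢ symmIcc n) ×ˢ (symmIcc n ×ˢ symmIcc n))
    (fun r => (r.1.1 + r.1.2) + (r.2.1 + r.2.2))
    (fun r hr => by simp only [mem_product, mem_Icc] at hr; push_cast; rw [abs_lt]; omega) x
  push_cast at h
  simp only [dirichletKernel_pow_four, h, ← quadCount.eq_1, quadCount_neg]
  ring

lemma sum_dirichletKernel_sq (n : ℕ) (x : ℝ) :
    ∑ k ∈ range (2 * n + 1), dirichletKernel n (x - 2 * k * π / (2 * n + 1)) ^ 2 =
      (2 * n + 1) ^ 2 := by
  have h := sum_range_sum_expI (2 * n + 1) (by omega) (symmIcc n ×ˢ symmIcc n)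
    (fun p => p.1 + p.2)
    (fun p hp => by simp only [mem_product, mem_Icc] at hp; push_cast; rw [abs_lt]; omega) x
  push_cast at h
  have hcount : ∀ t : ℤ, (pairCount n t : ℂ) = ((max (2 * n + 1 - |t|) 0 : ℤ) : ℂ) := fun t => by
    rw [← pairCount_eq]; rfl
  simp only [dirichletKernel_sq, h, ← pairCount.eq_1, hcount, abs_neg, abs_zero]
  rw [abs_of_pos (by positivity), sub_self, max_self, max_eq_left (by omega)]
  push_cast; ring

lemma sum_ell_sq (n : ℕ) (x : ℝ) : ∑ k ∈ range (2 * n + 1), ell n k x ^ 2 = 1 := by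
  have hN : (2 * n + 1 : ℂ) ≠ 0 := by exact_mod_cast (by positivity : (2 * n + 1 : ℝ) ≠ 0)
  have h : ((∑ k ∈ range (2 * n + 1), ell n k x ^ 2 : ℝ) : ℂ) = 1 := by
    push_cast
    simp only [ofReal_ell, div_pow]
    rw [← sum_div, sum_dirichletKernel_sq, div_self (pow_ne_zero 2 hN)]
  exact_mod_cast h

lemma sum_kisVertesi_weights_eq_one (n : ℕ) (x : ℝ) :
    ∑ k ∈ range (2 * n + 1), (4 * ell n k x ^ 3 - 3 * ell n k x ^ 4) = 1 := by
  have hN : (2 * n + 1 : ℂ) ≠ 0 := by exact_mod_cast (by positivity : (2 * n + 1 : ℝ) ≠ 0)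
  have hT0 : (tripleCount n 0 : ℂ) = 3 * n ^ 2 + 3 * n + 1 := by exact_mod_cast tripleCount_zero n
  have hT1 : 2 * (tripleCount n (2 * n + 1) : ℂ) = n * (n + 1) := by
    exact_mod_cast tripleCount_two_mul_add_one n
  have hQ0 : 3 * (quadCount n 0 : ℂ) = (2 * n + 1) * (8 * n ^ 2 + 8 * n + 3) := by
    exact_mod_cast quadCount_zero n
  have hQ1 : 3 * (quadCount n (2 * n + 1) : ℂ) = 2 * n * (n + 1) * (2 * n + 1) := by
    exact_mod_cast quadCount_two_mul_add_one n
  have h : ((∑ k ∈ range (2 * n + 1), (4 * ell n k x ^ 3 - 3 * ell n k x ^ 4) : ℝ) : ℂ) = 1 := by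
    push_cast
    simp only [ofReal_ell, div_pow]
    rw [sum_sub_distrib, ← mul_sum, ← mul_sum, ← sum_div, ← sum_div, sum_dirichletKernel_pow_three,
      sum_dirichletKernel_pow_four]
    field_simp
    set E := expI (-(2 * n + 1)) x + expI (2 * n + 1) x
    linear_combination (4 * (2 * n + 1) : ℂ) * hT0 + (2 * (2 * n + 1) * E) * hT1 - hQ0 - E * hQ1
  exact_mod_cast h

section ModulusOfContinuity

variable {f : ℝ → ℝ}

lemma bddAbove_abs_sub_of_isBounded (hf : Bornology.IsBounded (Set.range f)) (δ : ℝ) :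
    BddAbove {d : ℝ | ∃ x y : ℝ, |x - y| ≤ δ ∧ d = |f x - f y|} := by
  obtain ⟨C, hC⟩ := Metric.isBounded_iff.1 hf
  exact ⟨C, fun d ⟨x, y, _, hd⟩ => hd ▸ hC (Set.mem_range_self x) (Set.mem_range_self y)⟩

lemma abs_sub_le_omegaR (hf : Bornology.IsBounded (Set.range f)) {δ x y : ℝ} (h : |x - y| ≤ δ) :
    |f x - f y| ≤ omegaR f δ :=
  le_csSup (bddAbove_abs_sub_of_isBounded hf δ) ⟨x, y, h, rfl⟩

lemma omegaR_nonneg (hf : Bornology.IsBounded (Set.range f)) {δ : ℝ} (hδ : 0 ≤ δ) :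
    0 ≤ omegaR f δ :=
  (abs_nonneg _).trans (abs_sub_le_omegaR hf (x := 0) (y := 0) (by simpa using hδ))

lemma abs_sub_le_one_add_div_mul_omegaR (hf : Bornology.IsBounded (Set.range f)) {δ : ℝ}
    (hδ : 0 < δ) (x y : ℝ) : |f x - f y| ≤ (1 + |x - y| / δ) * omegaR f δ := by
  set m : ℕ := ⌊|x - y| / δ⌋₊ + 1
  have hm : (0 : ℝ) < m := by positivity
  have hm_gt : |x - y| / δ < m := by simpa [m] using Nat.lt_floor_add_one (|x - y| / δ)
  have hm_le : (m : ℝ) ≤ 1 + |x - y| / δ := by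
    simpa [m, add_comm] using Nat.floor_le (div_nonneg (abs_nonneg (x - y)) hδ.le)
  set z : ℕ → ℝ := fun i => y + i * ((x - y) / m)
  have hstep : ∀ i, |f (z (i + 1)) - f (z i)| ≤ omegaR f δ := fun i => by
    refine abs_sub_le_omegaR hf ?_
    rw [show z (i + 1) - z i = (x - y) / m by simp only [z]; push_cast; ring, abs_div,
      abs_of_pos hm, div_le_iff₀ hm]
    rw [div_lt_iff₀ hδ] at hm_gt
    linarith
  calc |f x - f y| = |∑ i ∈ range m, (f (z (i + 1)) - f (z i))| := by
        rw [sum_range_sub (fun i => f (z i))]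
        simp only [z, Nat.cast_zero, zero_mul, add_zero]
        rw [mul_div_cancel₀ _ hm.ne', add_sub_cancel]
    _ ≤ ∑ i ∈ range m, omegaR f δ := (abs_sum_le_sum_abs _ _).trans (sum_le_sum fun i _ => hstep i)
    _ = m * omegaR f δ := by rw [sum_const, card_range, nsmul_eq_mul]
    _ ≤ (1 + |x - y| / δ) * omegaR f δ := by
        gcongr
        exact omegaR_nonneg hf hδ.le

end ModulusOfContinuity

lemma exists_abs_sub_int_mul_two_pi_le (u : ℝ) :
    ∃ m : ℤ, |u - m * (2 * π)| ≤ π * |Real.sin (u / 2)| := by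
  refine ⟨round (u / (2 * π)), ?_⟩
  set v := u - round (u / (2 * π)) * (2 * π)
  have hv : |v| ≤ π := by
    have h := abs_sub_round (u / (2 * π))
    rw [show v = (u / (2 * π) - round (u / (2 * π))) * (2 * π) by
      simp only [v]; field_simp, abs_mul, abs_of_pos (by positivity : (0 : ℝ) < 2 * π)]
    nlinarith [pi_pos]
  have hsin : |Real.sin (u / 2)| = |Real.sin (v / 2)| := by
    rw [show u / 2 = v / 2 + round (u / (2 * π)) * π by simp only [v]; ring, sin_add_int_mul_pi,
      abs_mul, abs_zpow, abs_neg, abs_one, one_zpow, one_mul]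
  have hjordan := mul_abs_le_abs_sin (x := v / 2) (by rw [abs_div, abs_two]; linarith)
  rw [hsin]
  rw [abs_div, abs_two] at hjordan
  have := pi_pos
  calc |v| = π * (2 / π * (|v| / 2)) := by field_simp
    _ ≤ π * |Real.sin (v / 2)| := by gcongr

lemma abs_four_mul_pow_three_sub_three_mul_pow_four_le {ℓ : ℝ} (h : |ℓ| ≤ 1) :
    |4 * ℓ ^ 3 - 3 * ℓ ^ 4| ≤ 7 * |ℓ| ^ 3 := by
  calc |4 * ℓ ^ 3 - 3 * ℓ ^ 4| ≤ 4 * |ℓ| ^ 3 + 3 * |ℓ| ^ 4 := by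
        refine (abs_sub _ _).trans_eq ?_
        rw [abs_mul, abs_mul, abs_pow, abs_pow]
        norm_num
    _ ≤ 4 * |ℓ| ^ 3 + 3 * |ℓ| ^ 3 := by
        linarith [pow_le_pow_of_le_one (abs_nonneg ℓ) h (by norm_num : 3 ≤ 4)]
    _ = 7 * |ℓ| ^ 3 := by ring

lemma abs_sub_mul_kisVertesi_weight_le {f : ℝ → ℝ} (hf : Bornology.IsBounded (Set.range f))
    (hper : Function.Periodic f (2 * π)) {n : ℕ} (hn : 1 ≤ n) (k : ℕ) (x : ℝ) :
    |(f x - f (2 * k * π / (2 * n + 1))) * (4 * ell n k x ^ 3 - 3 * ell n k x ^ 4)| ≤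
      21 * omegaR f (1 / n) * ell n k x ^ 2 := by
  set xk := 2 * k * π / (2 * n + 1)
  set ℓ := ell n k x
  have hn0 : (0 : ℝ) < n := by exact_mod_cast hn
  obtain ⟨m, hv⟩ := exists_abs_sub_int_mul_two_pi_le (x - xk)
  set v := x - xk - m * (2 * π)
  have hfk : f xk = f (x - v) := by
    rw [show x - v = xk + m * (2 * π) by simp only [v]; ring, hper.int_mul m xk]
  have hD : |f x - f xk| ≤ (1 + n * |v|) * omegaR f (1 / n) := by
    rw [hfk]
    convert abs_sub_le_one_add_div_mul_omegaR hf (one_div_pos.2 hn0) x (x - v) using 3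
    rw [sub_sub_cancel, div_eq_mul_inv, one_div, inv_inv, mul_comm]
  have hL := abs_ell_le_one n k x
  have hsin := abs_ell_mul_abs_sin_le n k x
  have hvL : n * |v| * |ℓ| ≤ 2 := by
    have : (2 * n + 1) * |v| * |ℓ| ≤ π := by
      calc (2 * n + 1) * |v| * |ℓ| ≤ (2 * n + 1) * (π * |Real.sin ((x - xk) / 2)|) * |ℓ| := by
            gcongr
        _ = π * (|ℓ| * ((2 * n + 1) * |Real.sin ((x - xk) / 2)|)) := by ring
        _ ≤ π * 1 := by gcongr
        _ = π := mul_one π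
    nlinarith [pi_le_four, abs_nonneg v, abs_nonneg ℓ, mul_nonneg (abs_nonneg v) (abs_nonneg ℓ)]
  have hω := omegaR_nonneg hf (one_div_pos.2 hn0).le
  calc |(f x - f xk) * (4 * ℓ ^ 3 - 3 * ℓ ^ 4)|
      = |f x - f xk| * |4 * ℓ ^ 3 - 3 * ℓ ^ 4| := abs_mul _ _
    _ ≤ (1 + n * |v|) * omegaR f (1 / n) * (7 * |ℓ| ^ 3) := by
        gcongr
        exact abs_four_mul_pow_three_sub_three_mul_pow_four_le hL
    _ = 7 * omegaR f (1 / n) * ℓ ^ 2 * (|ℓ| + n * |v| * |ℓ|) := by rw [← sq_abs ℓ]; ring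
    _ ≤ 7 * omegaR f (1 / n) * ℓ ^ 2 * (1 + 2) := by gcongr
    _ = 21 * omegaR f (1 / n) * ℓ ^ 2 := by ring

lemma sub_Un_eq_sum (n : ℕ) (f : ℝ → ℝ) (x : ℝ) :
    f x - Un n f x = ∑ k ∈ range (2 * n + 1),
      (f x - f (2 * k * π / (2 * n + 1))) * (4 * ell n k x ^ 3 - 3 * ell n k x ^ 4) := by
  conv_lhs => rw [← mul_one (f x), ← sum_kisVertesi_weights_eq_one n x]
  rw [Un, mul_sum, ← sum_sub_distrib]
  exact sum_congr rfl fun k _ => by ring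

/-- There is a constant `c > 0` such that for every `2π`-periodic continuous
`f` and every `n ≥ 1`, `max_x |f(x) - U_n(f,x)| ≤ c ω(f, 1/n)`. -/
theorem kis_vertesi_jackson :
    ∃ c : ℝ, 0 < c ∧ ∀ f : ℝ → ℝ, Continuous f → (∀ x, f (x + 2 * π) = f x) →
      ∀ n : ℕ, 1 ≤ n → ∀ x : ℝ, |f x - Un n f x| ≤ c * omegaR f (1 / n) := by
  refine ⟨21, by norm_num, fun f hf hper n hn x => ?_⟩
  have hbdd := Function.Periodic.isBounded_of_continuous hper (by positivity) hf
  calc |f x - Un n f x| ≤ ∑ k ∈ range (2 * n + 1),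
        |(f x - f (2 * k * π / (2 * n + 1))) * (4 * ell n k x ^ 3 - 3 * ell n k x ^ 4)| := by
        rw [sub_Un_eq_sum]
        exact abs_sum_le_sum_abs _ _
    _ ≤ ∑ k ∈ range (2 * n + 1), 21 * omegaR f (1 / n) * ell n k x ^ 2 :=
        sum_le_sum fun k _ => abs_sub_mul_kisVertesi_weight_le hbdd hper hn k x
    _ = 21 * omegaR f (1 / n) := by rw [← mul_sum, sum_ell_sq, mul_one]
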